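/- arXiv:2306.15814 — 4 statements merged into one kernel-verified Lean document; each statement's English description precedes it below -/
import Mathlib

section
/- Consider a directed acyclic graph with strictly upper triangular adjacency matrix G = [[A, I+C],[0, B]], where A and B represent subgraphs of equal order and C is strictly upper triangular, and let R = [[A, I],[0, B]]. If B = C, then p(G) = p(R), where p(·) denotes the number of vertices along the longest directed path in the graph represented by the given adjacency matrix. -/
/-- `pLen M` is the number of vertices along the longest directed (simple) path in the
directed graph whose adjacency matrix is `M` (an edge from `a` to `b` iff `M a b ≠ 0`). -/
noncomputable def pLen {V : Type*} [Fintype V] (M : Matrix V V ℕ) : ℕ :=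
  sSup {r : ℕ | ∃ l : List V, l.Nodup ∧ l.Chain' (fun a b => M a b ≠ 0) ∧ l.length = r}

/-- A matrix is strictly upper triangular. -/
def StrictUpper {q : ℕ} (A : Matrix (Fin q) (Fin q) ℕ) : Prop :=
  ∀ a b : Fin q, b ≤ a → A a b = 0

/-- A 0–1 matrix (adjacency matrix). -/
def ZeroOne {q : ℕ} (A : Matrix (Fin q) (Fin q) ℕ) : Prop :=
  ∀ a b : Fin q, A a b ≤ 1

/-!
`R` is a subgraph of `G`. Conversely, a path of `G` runs through the top copy of the vertices,
crosses at most once, by an edge `u → v` of `I + C`, and then stays in the bottom copy. If that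
edge comes from `I` the path is already a path of `R`. Otherwise `B u v = C u v ≠ 0`, and the
crossing can be rerouted as `u → u' → v'` through the identity edge and the edge `u → v` of `B`
in the bottom copy; the new path is one vertex longer, and it stays simple because `B` is
strictly upper triangular.
-/

open Matrix List

section Paths

variable {V : Type*}

def IsPath (M : Matrix V V ℕ) (l : List V) : Prop :=
  l.Nodup ∧ l.IsChain (fun a b => M a b ≠ 0)

variable [Fintype V] {M N : Matrix V V ℕ}

lemma IsPath.length_le_pLen {l : List V} (h : IsPath M l) : l.length ≤ pLen M :=
  le_csSup ⟨Fintype.card V, fun _ ⟨_, hnd, _, hlen⟩ => hlen ▸ hnd.length_le_card⟩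
    ⟨l, h.1, h.2, rfl⟩

lemma pLen_le_pLen_of_forall_isPath
    (h : ∀ l, IsPath M l → ∃ l', IsPath N l' ∧ l.length ≤ l'.length) : pLen M ≤ pLen N := by
  refine csSup_le ⟨0, [], nodup_nil, isChain_nil, rfl⟩ ?_
  rintro _ ⟨l, hnd, hch, rfl⟩
  obtain ⟨l', hl', hlen⟩ := h l ⟨hnd, hch⟩
  exact hlen.trans hl'.length_le_pLen

lemma pLen_mono (h : ∀ a b, M a b ≠ 0 → N a b ≠ 0) : pLen M ≤ pLen N :=
  pLen_le_pLen_of_forall_isPath fun l hl => ⟨l, ⟨hl.1, hl.2.imp fun a b => h a b⟩, le_rfl⟩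

end Paths

section Blocks

variable {α β R : Type*} [Zero R] {A : Matrix α α R} {B : Matrix α β R} {C : Matrix β α R}
  {D : Matrix β β R}

lemma nodup_map_inl_append_map_inr_iff {xs : List α} {ys : List β} :
    (xs.map Sum.inl ++ ys.map Sum.inr).Nodup ↔ xs.Nodup ∧ ys.Nodup := by
  simp [nodup_append, nodup_map_iff Sum.inl_injective, nodup_map_iff Sum.inr_injective]

lemma isChain_fromBlocks_map_inl_append_map_inr_iff {xs : List α} {ys : List β} :
    (xs.map Sum.inl ++ ys.map Sum.inr).IsChain (fun a b => fromBlocks A B C D a b ≠ 0) ↔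
      xs.IsChain (fun a b => A a b ≠ 0) ∧ ys.IsChain (fun a b => D a b ≠ 0) ∧
        ∀ x ∈ xs.getLast?, ∀ y ∈ ys.head?, B x y ≠ 0 := by
  simp [isChain_append, isChain_map, getLast?_map, head?_map]

lemma exists_eq_map_inl_append_map_inr_of_isChain_fromBlocks {l : List (α ⊕ β)}
    (h : l.IsChain (fun a b => fromBlocks A B 0 D a b ≠ 0)) :
    ∃ (xs : List α) (ys : List β), l = xs.map Sum.inl ++ ys.map Sum.inr := by
  induction l with
  | nil => exact ⟨[], [], rfl⟩
  | cons a t ih =>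
    obtain ⟨xs, ys, rfl⟩ := ih h.tail
    rcases a with x | y
    · exact ⟨x :: xs, ys, rfl⟩
    · cases xs with
      | nil => exact ⟨[], y :: ys, rfl⟩
      | cons x xs => simp at h

end Blocks

lemma List.IsChain.nodup_of_lt {n : Type*} [Preorder n] {r : n → n → Prop}
    (hr : ∀ i j, r i j → i < j) {l : List n} (h : l.IsChain r) : l.Nodup :=
  (isChain_iff_pairwise.mp (h.imp fun i j => hr i j)).nodup

lemma StrictUpper.lt_of_ne_zero {q : ℕ} {B : Matrix (Fin q) (Fin q) ℕ} (hB : StrictUpper B)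
    {i j : Fin q} (h : B i j ≠ 0) : i < j :=
  lt_of_not_ge fun hji => h (hB i j hji)

section OneAdd

variable {n : Type*} [DecidableEq n] (A B : Matrix n n ℕ)

lemma one_add_apply_ne_zero_iff {i j : n} : (1 + B) i j ≠ 0 ↔ i = j ∨ B i j ≠ 0 := by
  by_cases hij : i = j <;> simp [one_apply, hij]

lemma pLen_fromBlocks_one_add_le [Fintype n] [Preorder n] (hB : ∀ i j, B i j ≠ 0 → i < j) :
    pLen (fromBlocks A (1 + B) 0 B) ≤ pLen (fromBlocks A 1 0 B) := by
  refine pLen_le_pLen_of_forall_isPath fun l ⟨hnd, hch⟩ => ?_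
  obtain ⟨xs, ys, rfl⟩ := exists_eq_map_inl_append_map_inr_of_isChain_fromBlocks hch
  obtain ⟨hxs, hys, hcross⟩ := isChain_fromBlocks_map_inl_append_map_inr_iff.mp hch
  by_cases hdiag : ∀ x ∈ xs.getLast?, ∀ y ∈ ys.head?, (1 : Matrix n n ℕ) x y ≠ 0
  · exact ⟨_, ⟨hnd, isChain_fromBlocks_map_inl_append_map_inr_iff.mpr ⟨hxs, hys, hdiag⟩⟩,
      le_rfl⟩
  push Not at hdiag
  obtain ⟨u, hu, v, hv, huv⟩ := hdiag
  have hBuv : B u v ≠ 0 :=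
    ((one_add_apply_ne_zero_iff B).mp (hcross u hu v hv)).resolve_left
      (by simpa [one_apply] using huv)
  have hys' : (u :: ys).IsChain (fun a b => B a b ≠ 0) :=
    isChain_cons.mpr ⟨fun y hy => Option.mem_unique hv hy ▸ hBuv, hys⟩
  refine ⟨xs.map Sum.inl ++ (u :: ys).map Sum.inr, ⟨?_, ?_⟩, by simp⟩
  · exact nodup_map_inl_append_map_inr_iff.mpr
      ⟨(nodup_map_inl_append_map_inr_iff.mp hnd).1, hys'.nodup_of_lt hB⟩
  · refine isChain_fromBlocks_map_inl_append_map_inr_iff.mpr ⟨hxs, hys', ?_⟩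
    rintro x hx y ⟨⟩
    obtain rfl := Option.mem_unique hu hx
    simp

end OneAdd

theorem pLen_fromBlocks_one_add_eq_general {q : ℕ} (A B C : Matrix (Fin q) (Fin q) ℕ)
    (hB : StrictUpper B)
    (hBC : B = C) :
    pLen (Matrix.fromBlocks A (1 + C) 0 B) = pLen (Matrix.fromBlocks A 1 0 B) := by
  subst hBC
  refine le_antisymm (pLen_fromBlocks_one_add_le A B fun _ _ => hB.lt_of_ne_zero) (pLen_mono ?_)
  rintro (i | i) (j | j) h
  all_goals simp_all

/-- **Lemma (longest paths, part (i)).**  For strictly upper triangular adjacency matrices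
`A`, `B`, `C` of equal order, if `B = C` then the longest path in the graph of
`G = [[A, I + C], [0, B]]` has the same number of vertices as the longest path in the graph
of `R = [[A, I], [0, B]]`. -/
theorem pLen_fromBlocks_one_add_eq {q : ℕ} (A B C : Matrix (Fin q) (Fin q) ℕ)
    (hA : StrictUpper A) (hB : StrictUpper B) (hC : StrictUpper C)
    (hA01 : ZeroOne A) (hB01 : ZeroOne B) (hC01 : ZeroOne C)
    (hBC : B = C) :
    pLen (Matrix.fromBlocks A (1 + C) 0 B) = pLen (Matrix.fromBlocks A 1 0 B) :=
  pLen_fromBlocks_one_add_eq_general A B C hB hBC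
end

section
/- Consider a directed acyclic graph with strictly upper triangular adjacency matrix G = [[A, I+A],[0, A]], where A is a strictly upper triangular adjacency matrix. Then p(G) = p(A) + 1, where p(·) denotes the number of vertices along the longest directed path in the graph represented by the given adjacency matrix. -/
open Matrix List

theorem List.exists_isChain_length_le_of_rel_or_eq {α : Type*} {R : α → α → Prop}
    {l₁ l₂ : List α} (h₁ : l₁.IsChain R) (h₂ : l₂.IsChain R)
    (h : ∀ x ∈ l₁.getLast?, ∀ y ∈ l₂.head?, R x y ∨ x = y) :
    ∃ l : List α, l.IsChain R ∧ l₁.length + l₂.length ≤ l.length + 1 := by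
  cases l₂ with
  | nil => exact ⟨l₁, h₁, by simp⟩
  | cons y t =>
    by_cases hR : ∀ x ∈ l₁.getLast?, R x y
    · exact ⟨l₁ ++ y :: t, isChain_append.mpr ⟨h₁, h₂, by simpa using hR⟩, by simp⟩
    · obtain ⟨x, hx, hxy⟩ := not_forall₂.mp hR
      obtain rfl : x = y := (h x hx y rfl).resolve_left hxy
      refine ⟨l₁ ++ t, isChain_append.mpr ⟨h₁, h₂.tail, fun a ha b hb => ?_⟩, by simp; omega⟩
      obtain rfl : a = x := Option.mem_unique ha hx
      exact (isChain_cons.mp h₂).1 b hb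

section pLen

variable {V : Type*} [Fintype V]

def pathLengths (M : Matrix V V ℕ) : Set ℕ :=
  {r | ∃ l : List V, l.Nodup ∧ l.IsChain (fun a b => M a b ≠ 0) ∧ l.length = r}

theorem pLen_eq_sSup_pathLengths (M : Matrix V V ℕ) : pLen M = sSup (pathLengths M) := rfl

theorem bddAbove_pathLengths (M : Matrix V V ℕ) : BddAbove (pathLengths M) :=
  ⟨Fintype.card V, by rintro r ⟨l, hnd, -, rfl⟩; exact hnd.length_le_card⟩

theorem exists_path_length_eq_pLen (M : Matrix V V ℕ) :
    ∃ l : List V, l.Nodup ∧ l.IsChain (fun a b => M a b ≠ 0) ∧ l.length = pLen M := by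
  rw [pLen_eq_sSup_pathLengths]
  exact Nat.sSup_mem (s := pathLengths M) ⟨0, [], nodup_nil, isChain_nil, rfl⟩
    (bddAbove_pathLengths M)

theorem length_le_pLen {M : Matrix V V ℕ} {l : List V} (hnd : l.Nodup)
    (hl : l.IsChain (fun a b => M a b ≠ 0)) : l.length ≤ pLen M :=
  le_csSup (bddAbove_pathLengths M) ⟨l, hnd, hl, rfl⟩

theorem one_le_pLen [Nonempty V] (M : Matrix V V ℕ) : 1 ≤ pLen M :=
  length_le_pLen (nodup_singleton (Classical.arbitrary V)) (isChain_singleton _)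

end pLen

namespace StrictUpper

variable {q : ℕ} {A : Matrix (Fin q) (Fin q) ℕ}

theorem lt_of_ne_zero_s4 (hA : StrictUpper A) {a b : Fin q} (h : A a b ≠ 0) : a < b :=
  lt_of_not_ge fun hba => h (hA a b hba)

theorem length_le_pLen (hA : StrictUpper A) {l : List (Fin q)}
    (hl : l.IsChain (fun a b => A a b ≠ 0)) : l.length ≤ pLen A :=
  _root_.length_le_pLen (isChain_iff_pairwise.mp (hl.imp fun _ _ => hA.lt_of_ne_zero_s4)).nodup hl

end StrictUpper

section fromBlocks

variable {m n : Type*} {A : Matrix m m ℕ} {B : Matrix m n ℕ} {D : Matrix n n ℕ}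

theorem exists_eq_map_inl_append_map_inr_of_isChain_fromBlocks_s4 {L : List (m ⊕ n)}
    (hL : L.IsChain (fun a b => fromBlocks A B 0 D a b ≠ 0)) :
    ∃ (l₁ : List m) (l₂ : List n), L = l₁.map Sum.inl ++ l₂.map Sum.inr := by
  induction L with
  | nil => exact ⟨[], [], rfl⟩
  | cons x L ih =>
    obtain ⟨hx, hL⟩ := isChain_cons.mp hL
    obtain ⟨l₁, l₂, rfl⟩ := ih hL
    cases x with
    | inl i => exact ⟨i :: l₁, l₂, rfl⟩
    | inr i =>
      cases l₁ with
      | nil => exact ⟨[], i :: l₂, rfl⟩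
      | cons j _ => simpa using hx (Sum.inl j) (by simp)

theorem isChain_fromBlocks_map_inl_append_map_inr {l₁ : List m} {l₂ : List n} :
    (l₁.map Sum.inl ++ l₂.map Sum.inr).IsChain (fun a b => fromBlocks A B 0 D a b ≠ 0) ↔
      l₁.IsChain (fun a b => A a b ≠ 0) ∧ l₂.IsChain (fun a b => D a b ≠ 0) ∧
        ∀ x ∈ l₁.getLast?, ∀ y ∈ l₂.head?, B x y ≠ 0 := by
  simp [isChain_append, isChain_map, getLast?_map, head?_map]

end fromBlocks

theorem ne_zero_or_eq_of_one_add_apply_ne_zero {n : Type*} [DecidableEq n] {A : Matrix n n ℕ}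
    {a b : n} (h : (1 + A) a b ≠ 0) : A a b ≠ 0 ∨ a = b := by
  rcases eq_or_ne a b with rfl | hne
  · exact Or.inr rfl
  · exact Or.inl (by simpa [one_apply_ne hne] using h)

variable {q : ℕ} {A : Matrix (Fin q) (Fin q) ℕ}

theorem pLen_fromBlocks_le (hA : StrictUpper A) :
    pLen (fromBlocks A (1 + A) 0 A) ≤ pLen A + 1 := by
  obtain ⟨L, -, hL, hlen⟩ := exists_path_length_eq_pLen (fromBlocks A (1 + A) 0 A)
  obtain ⟨l₁, l₂, rfl⟩ := exists_eq_map_inl_append_map_inr_of_isChain_fromBlocks_s4 hL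
  obtain ⟨h₁, h₂, h₁₂⟩ := isChain_fromBlocks_map_inl_append_map_inr.mp hL
  obtain ⟨l, hl, hle⟩ := exists_isChain_length_le_of_rel_or_eq h₁ h₂
    fun x hx y hy => ne_zero_or_eq_of_one_add_apply_ne_zero (h₁₂ x hx y hy)
  have := hA.length_le_pLen hl
  simp only [length_append, length_map] at hlen
  omega

theorem pLen_add_one_le_fromBlocks (hq : 0 < q) :
    pLen A + 1 ≤ pLen (fromBlocks A (1 + A) 0 A) := by
  have : Nonempty (Fin q) := ⟨⟨0, hq⟩⟩
  obtain ⟨l, hnd, hl, hlen⟩ := exists_path_length_eq_pLen A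
  have hne : l ≠ [] := ne_nil_of_length_pos (hlen ▸ one_le_pLen A)
  set L := l.map Sum.inl ++ [l.getLast hne].map Sum.inr
  have hL : L.IsChain (fun a b => fromBlocks A (1 + A) 0 A a b ≠ 0) :=
    isChain_fromBlocks_map_inl_append_map_inr.mpr
      ⟨hl, isChain_singleton _, by simp [getLast?_eq_some_getLast hne]⟩
  have hLnd : L.Nodup := nodup_append.mpr
    ⟨hnd.map Sum.inl_injective, nodup_singleton _, by simp⟩
  calc pLen A + 1 = L.length := by simp [L, hlen]
    _ ≤ _ := length_le_pLen hLnd hL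

theorem pLen_fromBlocks_one_add_self_general {q : ℕ} (hq : 0 < q) (A : Matrix (Fin q) (Fin q) ℕ)
    (hA : StrictUpper A) :
    pLen (Matrix.fromBlocks A (1 + A) 0 A) = pLen A + 1 :=
  le_antisymm (pLen_fromBlocks_le hA) (pLen_add_one_le_fromBlocks hq)

/-- **Lemma (longest paths, part (iii)).**  For a strictly upper triangular adjacency matrix `A`
(of positive order), the longest path in the graph of `G = [[A, I + A], [0, A]]` has
`p(A) + 1` vertices. -/
theorem pLen_fromBlocks_one_add_self {q : ℕ} (hq : 0 < q) (A : Matrix (Fin q) (Fin q) ℕ)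
    (hA : StrictUpper A) (hA01 : ZeroOne A) :
    pLen (Matrix.fromBlocks A (1 + A) 0 A) = pLen A + 1 :=
  pLen_fromBlocks_one_add_self_general hq A hA
end

section
/- Let A be a complex matrix in block upper triangular form with diagonal blocks A_{11},…,A_{rr}. Associate with A the reduced directed acyclic graph with adjacency matrix G, where G_{ij} = 1 if the off-diagonal block A_{ij} ≠ 0 and i ≠ j, and G_{ij} = 0 otherwise. Then the size of the largest Jordan block of A does not exceed the maximal sum of the sizes of the largest Jordan blocks of A_{ii},…,A_{jj} taken along all possible directed paths (i,…,j) in the graph of G. -/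
/-!
Fix μ and put `B = A - μ`. Let `ν i` be the index of μ for the diagonal block `A i i` and
`N i` the largest `ν`-weight of a graph path starting at `i`. If the blocks of `B ^ k x` at all
successors of `i` vanish from `c = N i - ν i` on, then the block of `B ^ (c + e) x` at `i` is
`(A i i - μ) ^ e` applied to a fixed vector; if `x` is a generalized eigenvector this vector is
killed by `(A i i - μ) ^ ν i`. By induction from the sinks of the (acyclic) graph, the block of
`B ^ k x` at `i` vanishes once `k ≥ N i`. Hence `ker B ^ (K + 1) = ker B ^ K` for `K` the
maximal path sum, and `ν i` is at most the largest Jordan block of `A i i`.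
-/

open Matrix Filter Asymptotics Topology

attribute [local instance] Matrix.frobeniusNormedAddCommGroup Matrix.frobeniusNormedSpace

/-- Index (size of largest Jordan block) of the eigenvalue `μ` of `A`. -/
noncomputable def nuIdx {N : Type*} [Fintype N] [DecidableEq N] (A : Matrix N N ℂ) (μ : ℂ) : ℕ :=
  sInf {k : ℕ | LinearMap.ker (((A - μ • 1) ^ k).mulVecLin) =
      LinearMap.ker (((A - μ • 1) ^ (k + 1)).mulVecLin)}

/-- Size of the largest Jordan block of `A`. -/
noncomputable def jordanBound {N : Type*} [Fintype N] [DecidableEq N] (A : Matrix N N ℂ) : ℕ :=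
  sSup (nuIdx A '' spectrum ℂ A)

/-- `A ∈ M_N(Ω, m)`: spectrum contained in `Ω` and largest Jordan block of size at most `m`. -/
def MnSet {N : Type*} [Fintype N] [DecidableEq N] (Ω : Set ℂ) (m : ℕ) (A : Matrix N N ℂ) : Prop :=
  spectrum ℂ A ⊆ Ω ∧ jordanBound A ≤ m

section NuIdx

open Module.End

variable {n : Type*} [Fintype n] [DecidableEq n]

lemma ker_mulVecLin_pow (B : Matrix n n ℂ) (k : ℕ) :
    LinearMap.ker ((B ^ k).mulVecLin) = LinearMap.ker (B.toLin' ^ k) := by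
  rw [← Matrix.toLin'_pow]; rfl

lemma ker_mulVecLin_pow_card_eq (B : Matrix n n ℂ) :
    LinearMap.ker ((B ^ Fintype.card n).mulVecLin) =
      LinearMap.ker ((B ^ (Fintype.card n + 1)).mulVecLin) := by
  rw [ker_mulVecLin_pow, ker_mulVecLin_pow, ← Module.finrank_fintype_fun_eq_card (R := ℂ),
    ker_pow_eq_ker_pow_finrank_of_le (Nat.le_succ _)]

lemma nuIdx_le_card (A : Matrix n n ℂ) (μ : ℂ) : nuIdx A μ ≤ Fintype.card n :=
  Nat.sInf_le (ker_mulVecLin_pow_card_eq _)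

lemma ker_pow_nuIdx_eq (A : Matrix n n ℂ) (μ : ℂ) :
    LinearMap.ker ((A - μ • 1).toLin' ^ nuIdx A μ) =
      LinearMap.ker ((A - μ • 1).toLin' ^ (nuIdx A μ + 1)) := by
  rw [← ker_mulVecLin_pow, ← ker_mulVecLin_pow]
  exact Nat.sInf_mem (s := {k : ℕ | LinearMap.ker (((A - μ • 1) ^ k).mulVecLin) =
    LinearMap.ker (((A - μ • 1) ^ (k + 1)).mulVecLin)}) ⟨_, ker_mulVecLin_pow_card_eq _⟩

lemma pow_nuIdx_mulVec_eq_zero {A : Matrix n n ℂ} {μ : ℂ} {w : n → ℂ} {k : ℕ}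
    (hw : (A - μ • 1) ^ k *ᵥ w = 0) :
    (A - μ • 1) ^ nuIdx A μ *ᵥ w = 0 := by
  have hstab : LinearMap.ker (((A - μ • 1) ^ (nuIdx A μ + k)).mulVecLin) =
      LinearMap.ker (((A - μ • 1) ^ nuIdx A μ).mulVecLin) := by
    rw [ker_mulVecLin_pow, ker_mulVecLin_pow]
    exact (ker_pow_constant (ker_pow_nuIdx_eq A μ) k).symm
  have hmem : w ∈ LinearMap.ker (((A - μ • 1) ^ (nuIdx A μ + k)).mulVecLin) := by
    rw [LinearMap.mem_ker, mulVecLin_apply, pow_add, ← mulVec_mulVec, hw, mulVec_zero]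
  simpa [hstab] using hmem

lemma nuIdx_le_of_ker_pow_succ_le {A : Matrix n n ℂ} {μ : ℂ} {K : ℕ}
    (h : ∀ w, (A - μ • 1) ^ (K + 1) *ᵥ w = 0 → (A - μ • 1) ^ K *ᵥ w = 0) :
    nuIdx A μ ≤ K := by
  refine Nat.sInf_le (le_antisymm ?_ fun w hw => h w hw)
  rw [ker_mulVecLin_pow, ker_mulVecLin_pow, pow_succ', mul_eq_comp]
  exact LinearMap.ker_le_ker_comp _ _

lemma nuIdx_eq_zero_of_notMem_spectrum {A : Matrix n n ℂ} {μ : ℂ}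
    (hμ : μ ∉ spectrum ℂ A) : nuIdx A μ = 0 := by
  have hunit : IsUnit (A - μ • 1) := by
    simpa [Algebra.algebraMap_eq_smul_one] using (spectrum.notMem_iff.mp hμ).neg
  refine Nat.le_zero.mp (nuIdx_le_of_ker_pow_succ_le fun w hw => ?_)
  rw [pow_zero, one_mulVec]
  exact Matrix.mulVec_injective_iff_isUnit.mpr hunit (by simpa using hw)

lemma nuIdx_le_jordanBound (A : Matrix n n ℂ) (μ : ℂ) : nuIdx A μ ≤ jordanBound A := by
  by_cases hμ : μ ∈ spectrum ℂ A
  · refine le_csSup ⟨Fintype.card n, ?_⟩ ⟨μ, hμ, rfl⟩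
    rintro _ ⟨ν, -, rfl⟩
    exact nuIdx_le_card A ν
  · simp [nuIdx_eq_zero_of_notMem_spectrum hμ]

end NuIdx

section PathSum

variable {ι : Type*} (E : ι → ι → Prop) (f : ι → ℕ)

def pathSums : Set ℕ :=
  (fun l : List ι => (l.map f).sum) '' {l | l ≠ [] ∧ l.IsChain E}

def pathSumsFrom (i : ι) : Set ℕ :=
  (fun l : List ι => (l.map f).sum) '' {l | l.IsChain E ∧ l.head? = some i}

noncomputable def maxPathSum : ℕ := sSup (pathSums E f)

noncomputable def maxPathSumFrom (i : ι) : ℕ := sSup (pathSumsFrom E f i)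

variable {E}

lemma mem_pathSumsFrom_self (i : ι) : f i ∈ pathSumsFrom E f i :=
  ⟨[i], ⟨List.isChain_singleton i, rfl⟩, by simp⟩

variable [Fintype ι] [LinearOrder ι]

lemma sum_map_le_sum_of_isChain (hE : ∀ i j, E i j → i < j) {l : List ι} (hl : l.IsChain E) :
    (l.map f).sum ≤ ∑ i, f i := by
  have hnodup : l.Nodup := (List.isChain_iff_pairwise.mp (hl.imp hE)).imp ne_of_lt
  rw [← List.sum_toFinset f hnodup]
  exact Finset.sum_le_sum_of_subset (Finset.subset_univ _)

lemma bddAbove_pathSums (hE : ∀ i j, E i j → i < j) : BddAbove (pathSums E f) := by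
  refine ⟨∑ i, f i, ?_⟩
  rintro _ ⟨l, ⟨-, hl⟩, rfl⟩
  exact sum_map_le_sum_of_isChain f hE hl

lemma bddAbove_pathSumsFrom (hE : ∀ i j, E i j → i < j) (i : ι) :
    BddAbove (pathSumsFrom E f i) := by
  refine ⟨∑ i, f i, ?_⟩
  rintro _ ⟨l, ⟨hl, -⟩, rfl⟩
  exact sum_map_le_sum_of_isChain f hE hl

lemma le_maxPathSumFrom (hE : ∀ i j, E i j → i < j) (i : ι) : f i ≤ maxPathSumFrom E f i :=
  le_csSup (bddAbove_pathSumsFrom f hE i) (mem_pathSumsFrom_self f i)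

lemma add_maxPathSumFrom_le (hE : ∀ i j, E i j → i < j) {i j : ι} (hij : E i j) :
    f i + maxPathSumFrom E f j ≤ maxPathSumFrom E f i := by
  obtain ⟨l, ⟨hl, hhead⟩, hsum⟩ : maxPathSumFrom E f j ∈ pathSumsFrom E f j :=
    Nat.sSup_mem ⟨_, mem_pathSumsFrom_self f j⟩ (bddAbove_pathSumsFrom f hE j)
  refine le_csSup (bddAbove_pathSumsFrom f hE i) ⟨i :: l, ⟨?_, rfl⟩, by simp [← hsum]⟩
  exact List.isChain_cons.mpr ⟨by simpa [hhead] using hij, hl⟩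

lemma maxPathSumFrom_le_maxPathSum (hE : ∀ i j, E i j → i < j) {g : ι → ℕ}
    (hfg : ∀ i, f i ≤ g i) (i : ι) : maxPathSumFrom E f i ≤ maxPathSum E g := by
  refine csSup_le ⟨_, mem_pathSumsFrom_self f i⟩ ?_
  rintro _ ⟨l, ⟨hl, hhead⟩, rfl⟩
  calc (l.map f).sum ≤ (l.map g).sum := List.sum_le_sum fun x _ => hfg x
    _ ≤ maxPathSum E g :=
      le_csSup (bddAbove_pathSums g hE) ⟨l, ⟨by rintro rfl; simp at hhead, hl⟩, rfl⟩

end PathSum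

namespace Matrix

section BlockAdj

variable {ι : Type*} {n : ι → Type*} {R : Type*}

def blockAdj [Zero R] (B : Matrix (Σ i, n i) (Σ i, n i) R) (i j : ι) : Prop :=
  i ≠ j ∧ ∃ a b, B ⟨i, a⟩ ⟨j, b⟩ ≠ 0

lemma BlockTriangular.blockAdj_lt [Zero R] [LinearOrder ι]
    {A : Matrix (Σ i, n i) (Σ i, n i) R} (hA : A.BlockTriangular Sigma.fst) {i j : ι}
    (hij : blockAdj A i j) : i < j := by
  obtain ⟨hne, a, b, hab⟩ := hij
  exact lt_of_le_of_ne (le_of_not_gt fun hji => hab (hA hji)) hne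

lemma blockAdj_sub_smul_one [DecidableEq ι] [∀ i, DecidableEq (n i)] [Ring R]
    (A : Matrix (Σ i, n i) (Σ i, n i) R) (μ : R) : blockAdj (A - μ • 1) = blockAdj A := by
  ext i j
  refine and_congr_right fun hij => ?_
  simp [sub_apply, hij]

lemma blockDiag'_sub_smul_one [DecidableEq ι] [∀ i, DecidableEq (n i)] [Ring R]
    (A : Matrix (Σ i, n i) (Σ i, n i) R) (μ : R) (i : ι) :
    blockDiag' (A - μ • 1) i = blockDiag' A i - μ • 1 := by
  simp [blockDiag'_sub, blockDiag'_smul, blockDiag'_one]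

variable [Fintype ι] [∀ i, Fintype (n i)] [Semiring R] {B : Matrix (Σ i, n i) (Σ i, n i) R}

lemma mulVec_apply_eq_blockDiag'_mulVec {y : (Σ i, n i) → R} {i : ι}
    (hy : ∀ j, blockAdj B i j → ∀ b, y ⟨j, b⟩ = 0) :
    (fun a => (B *ᵥ y) ⟨i, a⟩) = blockDiag' B i *ᵥ fun b => y ⟨i, b⟩ := by
  ext a
  rw [mulVec, dotProduct, Fintype.sum_sigma, Finset.sum_eq_single i]
  · rfl
  · intro j _ hji
    refine Finset.sum_eq_zero fun b _ => ?_
    by_cases hadj : blockAdj B i j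
    · rw [hy j hadj b, mul_zero]
    · have hB : B ⟨i, a⟩ ⟨j, b⟩ = 0 := by
        by_contra hB
        exact hadj ⟨Ne.symm hji, a, b, hB⟩
      rw [hB, zero_mul]
  · simp

variable [DecidableEq ι] [∀ i, DecidableEq (n i)]

lemma pow_add_mulVec_apply {x : (Σ i, n i) → R} {i : ι} {c : ℕ}
    (hc : ∀ k, c ≤ k → ∀ j, blockAdj B i j → ∀ b, (B ^ k *ᵥ x) ⟨j, b⟩ = 0)
    (e : ℕ) :
    (fun a => (B ^ (c + e) *ᵥ x) ⟨i, a⟩) =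
      blockDiag' B i ^ e *ᵥ fun a => (B ^ c *ᵥ x) ⟨i, a⟩ := by
  induction e with
  | zero => simp
  | succ e ih =>
    rw [← add_assoc, pow_succ', ← mulVec_mulVec,
      mulVec_apply_eq_blockDiag'_mulVec fun j hj => hc _ (by omega) j hj, ih,
      mulVec_mulVec, ← pow_succ']

theorem pow_mulVec_apply_eq_zero (hwf : WellFounded (flip (blockAdj B))) (ν N : ι → ℕ)
    (hν : ∀ i (w : n i → R) k,
      blockDiag' B i ^ k *ᵥ w = 0 → blockDiag' B i ^ ν i *ᵥ w = 0)
    (hνN : ∀ i, ν i ≤ N i) (hN : ∀ i j, blockAdj B i j → ν i + N j ≤ N i)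
    {x : (Σ i, n i) → R} {M : ℕ} (hx : B ^ M *ᵥ x = 0) (i : ι) {k : ℕ} (hk : N i ≤ k)
    (a : n i) : (B ^ k *ᵥ x) ⟨i, a⟩ = 0 := by
  induction i using hwf.induction generalizing k with
  | _ i ih =>
  have hchain := pow_add_mulVec_apply (c := N i - ν i) fun k hk j hij =>
    ih j hij (by have := hN i j hij; omega)
  have hw : blockDiag' B i ^ ν i *ᵥ (fun a => (B ^ (N i - ν i) *ᵥ x) ⟨i, a⟩) = 0 := by
    refine hν i _ M ?_
    rw [← hchain, pow_add, ← mulVec_mulVec, hx, mulVec_zero]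
    rfl
  obtain ⟨d, rfl⟩ : ∃ d, k = N i - ν i + (d + ν i) :=
    ⟨k - N i, by have := hνN i; omega⟩
  calc (B ^ (N i - ν i + (d + ν i)) *ᵥ x) ⟨i, a⟩
      = (blockDiag' B i ^ (d + ν i) *ᵥ fun a => (B ^ (N i - ν i) *ᵥ x) ⟨i, a⟩) a :=
        congrFun (hchain _) a
    _ = 0 := by rw [pow_add, ← mulVec_mulVec, hw, mulVec_zero]; rfl

end BlockAdj

end Matrix

theorem nuIdx_le_maxPathSum {ι : Type*} [Fintype ι] [LinearOrder ι] {n : ι → Type*}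
    [∀ i, Fintype (n i)] [∀ i, DecidableEq (n i)] {A : Matrix (Σ i, n i) (Σ i, n i) ℂ}
    (hA : A.BlockTriangular Sigma.fst) (μ : ℂ) :
    nuIdx A μ ≤ maxPathSum (blockAdj A) fun i => jordanBound (blockDiag' A i) := by
  set ν := fun i => nuIdx (blockDiag' A i) μ
  set N := maxPathSumFrom (blockAdj A) ν
  have hlt : ∀ i j, blockAdj A i j → i < j := fun i j => hA.blockAdj_lt
  have hadj := blockAdj_sub_smul_one A μ
  have hwf : WellFounded (flip (blockAdj (A - μ • 1))) :=
    hadj ▸ (wellFounded_gt (α := ι)).mono fun j i hij => hlt i j hij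
  have hν : ∀ i (w : n i → ℂ) k, blockDiag' (A - μ • 1) i ^ k *ᵥ w = 0 →
      blockDiag' (A - μ • 1) i ^ ν i *ᵥ w = 0 := by
    simpa only [blockDiag'_sub_smul_one] using fun i w k => pow_nuIdx_mulVec_eq_zero
  have hN : ∀ i j, blockAdj (A - μ • 1) i j → ν i + N j ≤ N i :=
    hadj ▸ fun i j hij => add_maxPathSumFrom_le ν hlt hij
  have hNK (i : ι) := maxPathSumFrom_le_maxPathSum ν hlt (fun j => nuIdx_le_jordanBound _ μ) i
  exact nuIdx_le_of_ker_pow_succ_le fun x hx => funext fun ⟨i, a⟩ =>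
    pow_mulVec_apply_eq_zero hwf ν N hν (le_maxPathSumFrom ν hlt) hN hx i (hNK i) a

open scoped Classical in
/-- **Friedland–Hershkowitz bound.**  For a block upper triangular complex matrix `A` with
diagonal blocks `A ⟨i,·⟩ ⟨i,·⟩`, the size of the largest Jordan block of `A` is bounded by the
maximal sum of the sizes of the largest Jordan blocks of the diagonal blocks along all directed
paths of the reduced graph (which has an edge `i → j` iff `i ≠ j` and the block `(i,j)` of `A`
is nonzero). -/
theorem jordanBound_le_sup_path_sum {r : ℕ} (sz : Fin r → ℕ)
    (A : Matrix ((i : Fin r) × Fin (sz i)) ((i : Fin r) × Fin (sz i)) ℂ)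
    (hupper : ∀ (i j : Fin r) (a : Fin (sz i)) (b : Fin (sz j)), j < i → A ⟨i, a⟩ ⟨j, b⟩ = 0) :
    jordanBound A ≤
      sSup ((fun l : List (Fin r) =>
          (l.map fun i => jordanBound (Matrix.of fun a b : Fin (sz i) => A ⟨i, a⟩ ⟨i, b⟩)).sum) ''
        {l : List (Fin r) | l ≠ [] ∧
          l.Chain' fun i j => i ≠ j ∧ ∃ a b, A ⟨i, a⟩ ⟨j, b⟩ ≠ 0}) := by
  have hA : A.BlockTriangular Sigma.fst := fun ⟨i, a⟩ ⟨j, b⟩ hji => hupper i j a b hji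
  exact csSup_le' (Set.forall_mem_image.2 fun μ _ => nuIdx_le_maxPathSum hA μ)
end

section
/- Let A(x) be an n×n complex-matrix-valued function of j variables, k times differentiable in a neighborhood of x̄ with A(x) ∈ M_n(Ω,m) there. For fixed indices d_1,…,d_k ∈ {1,…,j}, define X_0(x) = A(x); Q_i(x,ε) = [[X_{i−1}(x), (X_{i−1}(x + ε e_{d_i}) − X_{i−1}(x))/ε],[0, X_{i−1}(x + ε e_{d_i})]]; and X_i(x) = lim_{ε→0} Q_i(x,ε), for i = 1,…,k. Then: (i) for all sufficiently small ε ≠ 0, Q_i(x̄,ε) ∈ M_{2^i n}(Ω, (i+1)m); and (ii) X_i(x̄) ∈ M_{2^i n}(Ω, (i+1)m), for i = 1,…,k. -/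
open Matrix Filter Asymptotics Topology

attribute [local instance] Matrix.frobeniusNormedAddCommGroup Matrix.frobeniusNormedSpace

open scoped Classical in
/-- The primary matrix function `f(A)`, defined (via Hermite interpolation) as `p(A)` for any
polynomial `p` matching the values and derivatives of `f` on the spectrum of `A` up to the
index of each eigenvalue; this coincides with the usual definition via the Jordan form. -/
noncomputable def matFun {N : Type*} [Fintype N] [DecidableEq N] (f : ℂ → ℂ)
    (A : Matrix N N ℂ) : Matrix N N ℂ :=
  if h : ∃ p : Polynomial ℂ, ∀ μ ∈ spectrum ℂ A, ∀ i < nuIdx A μ,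
      iteratedDeriv i (fun z => p.eval z) μ = iteratedDeriv i f μ
  then (Polynomial.aeval A) h.choose else 0

/-- Partial derivative in direction `d` of a function of `j` real variables. -/
noncomputable def pd {j : ℕ} {M : Type*} [NormedAddCommGroup M] [NormedSpace ℝ M]
    (d : Fin j) (A : (Fin j → ℝ) → M) : (Fin j → ℝ) → M :=
  fun x => fderiv ℝ A x (Pi.single d 1)

/-- Iterated partial derivative `∂^α` for a multi-index `α`. -/
noncomputable def mderiv {j : ℕ} {M : Type*} [NormedAddCommGroup M] [NormedSpace ℝ M]
    (α : Fin j → ℕ) (A : (Fin j → ℝ) → M) : (Fin j → ℝ) → M :=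
  ((List.finRange j).flatMap fun d => List.replicate (α d) d).foldr pd A

/-- Index type for the `2^i n × 2^i n` block matrices. -/
def Idx (n : ℕ) : ℕ → Type
  | 0 => Fin n
  | i + 1 => Idx n i ⊕ Idx n i

instance Idx.fintype (n : ℕ) : ∀ i, Fintype (Idx n i)
  | 0 => inferInstanceAs (Fintype (Fin n))
  | i + 1 => letI := Idx.fintype n i; inferInstanceAs (Fintype (Idx n i ⊕ Idx n i))

instance Idx.decEq (n : ℕ) : ∀ i, DecidableEq (Idx n i)
  | 0 => inferInstanceAs (DecidableEq (Fin n))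
  | i + 1 => letI := Idx.decEq n i; inferInstanceAs (DecidableEq (Idx n i ⊕ Idx n i))

/-- The recursive block upper triangular sequence `X_i(x)` of the paper. -/
noncomputable def Xseq {n j : ℕ} (A : (Fin j → ℝ) → Matrix (Fin n) (Fin n) ℂ) (d : ℕ → Fin j) :
    (i : ℕ) → (Fin j → ℝ) → Matrix (Idx n i) (Idx n i) ℂ
  | 0 => A
  | i + 1 => fun x =>
      Matrix.fromBlocks (Xseq A d i x) (pd (d i) (Xseq A d i) x) 0 (Xseq A d i x)

/-- The recursive block upper triangular sequence `F_i(x)` of the paper. -/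
noncomputable def Fseq {n j : ℕ} (f : ℂ → ℂ) (A : (Fin j → ℝ) → Matrix (Fin n) (Fin n) ℂ)
    (d : ℕ → Fin j) : (i : ℕ) → (Fin j → ℝ) → Matrix (Idx n i) (Idx n i) ℂ
  | 0 => fun x => matFun f (A x)
  | i + 1 => fun x =>
      Matrix.fromBlocks (Fseq f A d i x) (pd (d i) (Fseq f A d i) x) 0 (Fseq f A d i x)

/-- The finite difference block matrix `Q_i(x, ε)` of the paper, built from `X_{i-1}`. -/
noncomputable def Qof {n j i : ℕ} (Xi : (Fin j → ℝ) → Matrix (Idx n i) (Idx n i) ℂ)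
    (d : Fin j) (x : Fin j → ℝ) (ε : ℝ) : Matrix (Idx n (i + 1)) (Idx n (i + 1)) ℂ :=
  Matrix.fromBlocks (Xi x) (ε⁻¹ • (Xi (x + ε • (Pi.single d 1 : Fin j → ℝ)) - Xi x)) 0
    (Xi (x + ε • (Pi.single d 1 : Fin j → ℝ)))

/-- The sequence `X_i(x)` defined as the limit of `Q_i(x, ε)` for `ε → 0`, `ε ≠ 0`. -/
noncomputable def Xlim {n j : ℕ} (A : (Fin j → ℝ) → Matrix (Fin n) (Fin n) ℂ) (d : ℕ → Fin j) :
    (i : ℕ) → (Fin j → ℝ) → Matrix (Idx n i) (Idx n i) ℂ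
  | 0 => A
  | i + 1 => fun x => limUnder (𝓝[≠] (0 : ℝ)) (Qof (Xlim A d i) (d i) x)

/-!
Grade the indices of `X_i` by the number `wt` of right summands. By induction, near `x̄` the
matrix `X_i(x)` is block upper triangular for this grading and its graded diagonal part is
`diagRep (A x) i`, the block diagonal matrix of `2^i` copies of `A(x)`: the new block `∂X_i` of
`X_{i+1}` vanishes below the graded diagonal because the corresponding entries of `X_i` vanish
identically near `x̄`. A block triangular matrix with `p` levels has its spectrum inside that of
its diagonal part and ascents at most `p` times those of the diagonal part, whence
`X_i(x̄) ∈ M(Ω, (i+1)m)`. Finally `Q_{i+1}(x̄, ε)` is conjugate, by the shear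
`[[1, ε⁻¹], [0, 1]]`, to the block diagonal matrix of `X_i(x̄)` and `X_i(x̄ + ε e_d)`.
-/

section Ascent

variable {N : Type*} [Fintype N] [DecidableEq N]

/-- The ascent of `M - μ • 1` is at most `a`; ascent `0` means that `μ` is not an eigenvalue. -/
def AscentLE (M : Matrix N N ℂ) (μ : ℂ) (a : ℕ) : Prop :=
  ∀ (K : ℕ) (v : N → ℂ), (M - μ • 1) ^ K *ᵥ v = 0 → (M - μ • 1) ^ a *ᵥ v = 0

lemma AscentLE.mono {M : Matrix N N ℂ} {μ : ℂ} {a b : ℕ} (h : AscentLE M μ a) (hab : a ≤ b) :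
    AscentLE M μ b := by
  intro K v hv
  rw [← Nat.sub_add_cancel hab, pow_add, ← mulVec_mulVec, h K v hv, mulVec_zero]

lemma ker_pow_eq_of_ascentLE {M : Matrix N N ℂ} {μ : ℂ} {a : ℕ} (h : AscentLE M μ a) :
    LinearMap.ker ((M - μ • 1) ^ a).mulVecLin =
      LinearMap.ker ((M - μ • 1) ^ (a + 1)).mulVecLin := by
  ext v
  simp only [LinearMap.mem_ker, mulVecLin_apply]
  refine ⟨fun hv => ?_, h (a + 1) v⟩
  rw [pow_succ', ← mulVec_mulVec, hv, mulVec_zero]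

lemma notMem_spectrum_iff_ascentLE_zero {M : Matrix N N ℂ} {μ : ℂ} :
    μ ∉ spectrum ℂ M ↔ AscentLE M μ 0 := by
  rw [spectrum.notMem_iff, Algebra.algebraMap_eq_smul_one, ← IsUnit.neg_iff, neg_sub]
  constructor
  · intro hu K v hv
    simpa using mulVec_injective_iff_isUnit.mpr (hu.pow K) (hv.trans (mulVec_zero _).symm)
  · intro h
    refine mulVec_injective_iff_isUnit.mp fun v w hvw => sub_eq_zero.mp ?_
    simpa using h 1 (v - w) (by rw [pow_one, mulVec_sub, hvw, sub_self])

lemma ascentLE_nuIdx {M : Matrix N N ℂ} {μ : ℂ} : AscentLE M μ (nuIdx M μ) := by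
  set f := Matrix.toLin' (M - μ • 1)
  have hker : ∀ k, LinearMap.ker ((M - μ • 1) ^ k).mulVecLin = LinearMap.ker (f ^ k) := by
    intro k; rw [← Matrix.toLin'_apply', Matrix.toLin'_pow]
  have hstable : LinearMap.ker (f ^ nuIdx M μ) = LinearMap.ker (f ^ (nuIdx M μ + 1)) := by
    obtain ⟨k, -, hk⟩ := Module.End.exists_ker_pow_eq_ker_pow_succ f
    simp only [nuIdx, hker]
    exact Nat.sInf_mem (s := {k | LinearMap.ker (f ^ k) = LinearMap.ker (f ^ (k + 1))}) ⟨k, hk⟩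
  intro K v hv
  have hK : v ∈ LinearMap.ker (f ^ (nuIdx M μ + K)) := by
    rw [← hker, LinearMap.mem_ker, pow_add, mulVecLin_apply, ← mulVec_mulVec, hv, mulVec_zero]
  rwa [← Module.End.ker_pow_constant hstable, ← hker] at hK

lemma jordanBound_le_iff {M : Matrix N N ℂ} {m : ℕ} :
    jordanBound M ≤ m ↔ ∀ μ, AscentLE M μ m := by
  constructor
  · intro h μ
    by_cases hμ : μ ∈ spectrum ℂ M
    · refine ascentLE_nuIdx.mono (le_trans ?_ h)
      exact le_csSup ((Matrix.finite_spectrum M).image _).bddAbove ⟨μ, hμ, rfl⟩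
    · exact (notMem_spectrum_iff_ascentLE_zero.mp hμ).mono (Nat.zero_le m)
  · refine fun h => csSup_le' ?_
    rintro _ ⟨μ, -, rfl⟩
    exact Nat.sInf_le (ker_pow_eq_of_ascentLE (h μ))

lemma mnSet_iff {Ω : Set ℂ} {m : ℕ} {M : Matrix N N ℂ} :
    MnSet Ω m M ↔ (∀ μ ∈ Ω, AscentLE M μ m) ∧ ∀ μ ∉ Ω, AscentLE M μ 0 := by
  rw [MnSet, jordanBound_le_iff]
  constructor
  · rintro ⟨hspec, hbound⟩
    exact ⟨fun μ _ => hbound μ, fun μ hμ =>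
      notMem_spectrum_iff_ascentLE_zero.mp fun hμ' => hμ (hspec hμ')⟩
  · rintro ⟨hin, hout⟩
    refine ⟨fun μ hμ => ?_, fun μ => ?_⟩
    · by_contra hμΩ
      exact notMem_spectrum_iff_ascentLE_zero.mpr (hout μ hμΩ) hμ
    · by_cases hμ : μ ∈ Ω
      · exact hin μ hμ
      · exact (hout μ hμ).mono (Nat.zero_le m)

end Ascent

lemma fromBlocks_diagonal_sub_smul_one {L R : Type*} [DecidableEq L] [DecidableEq R]
    (X : Matrix L L ℂ) (Y : Matrix R R ℂ) (μ : ℂ) :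
    fromBlocks X 0 0 Y - μ • 1 = fromBlocks (X - μ • 1) 0 0 (Y - μ • 1) := by
  rw [← fromBlocks_one, fromBlocks_smul]
  ext (i | i) (j | j) <;> simp

section BlockDiagonal

variable {L R : Type*} [Fintype L] [DecidableEq L] [Fintype R] [DecidableEq R]

lemma AscentLE.fromBlocks_diagonal {X : Matrix L L ℂ} {Y : Matrix R R ℂ} {μ : ℂ} {a : ℕ}
    (hX : AscentLE X μ a) (hY : AscentLE Y μ a) : AscentLE (fromBlocks X 0 0 Y) μ a := by
  intro K v hv
  simp only [fromBlocks_diagonal_sub_smul_one, fromBlocks_diagonal_pow, fromBlocks_mulVec,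
    zero_mulVec, add_zero, zero_add] at hv ⊢
  rw [← Sum.elim_zero_zero, Sum.elim_eq_iff] at hv ⊢
  exact ⟨hX K _ hv.1, hY K _ hv.2⟩

lemma AscentLE.conj {M : Matrix L L ℂ} {μ : ℂ} {a : ℕ} (u : (Matrix L L ℂ)ˣ)
    (h : AscentLE M μ a) : AscentLE (u * M * u⁻¹ : Matrix L L ℂ) μ a := by
  have hsub : (u * M * u⁻¹ : Matrix L L ℂ) - μ • 1 = u * (M - μ • 1) * u⁻¹ := by
    simp [mul_sub, sub_mul]
  have hmulVec : ∀ (k : ℕ) (v : L → ℂ), (u * M * u⁻¹ - μ • 1 : Matrix L L ℂ) ^ k *ᵥ v =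
      u *ᵥ ((M - μ • 1) ^ k *ᵥ (↑u⁻¹ *ᵥ v)) := by
    intro k v
    rw [hsub, Units.conj_pow, mulVec_mulVec, mulVec_mulVec]
  intro K v hv
  rw [hmulVec] at hv ⊢
  have hK : (M - μ • 1) ^ K *ᵥ (↑u⁻¹ *ᵥ v) = 0 := by
    have := congrArg (fun z => (↑u⁻¹ : Matrix L L ℂ) *ᵥ z) hv
    rwa [mulVec_mulVec, Units.inv_mul, one_mulVec, mulVec_zero] at this
  rw [h K _ hK, mulVec_zero]

end BlockDiagonal

section MnSet

variable {L R : Type*} [Fintype L] [DecidableEq L] [Fintype R] [DecidableEq R] {Ω : Set ℂ}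
  {m : ℕ}

lemma MnSet.mono {M : Matrix L L ℂ} {a b : ℕ} (h : MnSet Ω a M) (hab : a ≤ b) : MnSet Ω b M :=
  ⟨h.1, h.2.trans hab⟩

lemma MnSet.fromBlocks_diagonal {X : Matrix L L ℂ} {Y : Matrix R R ℂ} (hX : MnSet Ω m X)
    (hY : MnSet Ω m Y) : MnSet Ω m (fromBlocks X 0 0 Y) := by
  rw [mnSet_iff] at hX hY ⊢
  exact ⟨fun μ hμ => (hX.1 μ hμ).fromBlocks_diagonal (hY.1 μ hμ),
    fun μ hμ => (hX.2 μ hμ).fromBlocks_diagonal (hY.2 μ hμ)⟩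

lemma MnSet.conj {M : Matrix L L ℂ} (u : (Matrix L L ℂ)ˣ) (h : MnSet Ω m M) :
    MnSet Ω m (u * M * u⁻¹ : Matrix L L ℂ) := by
  rw [mnSet_iff] at h ⊢
  exact ⟨fun μ hμ => (h.1 μ hμ).conj u, fun μ hμ => (h.2 μ hμ).conj u⟩

end MnSet

lemma exists_fromBlocks_smul_sub_eq_conj {L : Type*} [Fintype L] [DecidableEq L]
    (X Y : Matrix L L ℂ) (c : ℝ) :
    ∃ u : (Matrix (L ⊕ L) (L ⊕ L) ℂ)ˣ,
      fromBlocks X (c • (Y - X)) 0 Y = u * fromBlocks X 0 0 Y * u⁻¹ := by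
  let u : (Matrix (L ⊕ L) (L ⊕ L) ℂ)ˣ :=
    { val := fromBlocks 1 (c • 1) 0 1
      inv := fromBlocks 1 (-c • 1) 0 1
      val_inv := by simp [fromBlocks_multiply, ← fromBlocks_one]
      inv_val := by simp [fromBlocks_multiply, ← fromBlocks_one] }
  refine ⟨u, ?_⟩
  show _ = fromBlocks 1 (c • 1) 0 1 * fromBlocks X 0 0 Y * fromBlocks 1 (-c • 1) 0 1
  rw [fromBlocks_multiply, fromBlocks_multiply]
  congr 1 <;> simp [sub_eq_add_neg, add_comm]

section Graded

variable {ι : Type*} {w : ι → ℕ} {N E : Matrix ι ι ℂ}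

structure IsGradedTriangular (w : ι → ℕ) (N E : Matrix ι ι ℂ) : Prop where
  apply_eq_zero_of_lt : ∀ r c, w c < w r → N r c = 0
  apply_eq_of_eq : ∀ r c, w r = w c → N r c = E r c
  diag_apply_eq_zero_of_ne : ∀ r c, w r ≠ w c → E r c = 0

namespace IsGradedTriangular

lemma sub_smul_one [DecidableEq ι] (h : IsGradedTriangular w N E) (μ : ℂ) :
    IsGradedTriangular w (N - μ • 1) (E - μ • 1) := by
  have hone : ∀ r c, w r ≠ w c → (1 : Matrix ι ι ℂ) r c = 0 :=
    fun r c hrc => one_apply_ne fun h => hrc (congrArg w h)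
  refine ⟨fun r c hrc => ?_, fun r c hrc => ?_, fun r c hrc => ?_⟩
  · simp [h.apply_eq_zero_of_lt r c hrc, hone r c hrc.ne']
  · simp [h.apply_eq_of_eq r c hrc]
  · simp [h.diag_apply_eq_zero_of_ne r c hrc, hone r c hrc]

lemma fromBlocks {Y : Matrix ι ι ℂ} (h : IsGradedTriangular w N E)
    (hY : ∀ r c, w c < w r → Y r c = 0) :
    IsGradedTriangular (Sum.elim w (w · + 1)) (Matrix.fromBlocks N Y 0 N)
      (Matrix.fromBlocks E 0 0 E) := by
  refine ⟨?_, ?_, ?_⟩ <;> rintro (a | a) (b | b) hab <;>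
    simp only [Sum.elim_inl, Sum.elim_inr] at hab
  · exact h.apply_eq_zero_of_lt a b hab
  · exact hY a b (by omega)
  · rfl
  · exact h.apply_eq_zero_of_lt a b (by omega)
  · exact h.apply_eq_of_eq a b hab
  · exact hY a b (by omega)
  · rfl
  · exact h.apply_eq_of_eq a b (by omega)
  · exact h.diag_apply_eq_zero_of_ne a b hab
  · rfl
  · rfl
  · exact h.diag_apply_eq_zero_of_ne a b (by omega)

variable [Fintype ι]

lemma mulVec_apply_eq_zero (h : IsGradedTriangular w N E) {t : ℕ} {v : ι → ℂ}
    (hv : ∀ c, t < w c → v c = 0) (r : ι) (hr : t < w r) : (N *ᵥ v) r = 0 := by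
  simp only [mulVec, dotProduct]
  refine Finset.sum_eq_zero fun c _ => ?_
  by_cases hc : t < w c
  · rw [hv c hc, mul_zero]
  · rw [h.apply_eq_zero_of_lt r c (by omega), zero_mul]

lemma indicator_mulVec (h : IsGradedTriangular w N E) {t : ℕ} {v : ι → ℂ}
    (hv : ∀ c, t < w c → v c = 0) :
    {c | w c = t}.indicator (N *ᵥ v) = E *ᵥ {c | w c = t}.indicator v := by
  ext r
  by_cases hr : w r = t
  · rw [Set.indicator_of_mem (s := {c | w c = t}) hr]
    simp only [mulVec, dotProduct]
    refine Finset.sum_congr rfl fun c _ => ?_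
    by_cases hc : w c = t
    · rw [Set.indicator_of_mem (s := {c | w c = t}) hc, h.apply_eq_of_eq r c (hr.trans hc.symm)]
    · rw [Set.indicator_of_notMem (s := {c | w c = t}) hc, mul_zero]
      by_cases hct : t < w c
      · rw [hv c hct, mul_zero]
      · rw [h.apply_eq_zero_of_lt r c (by omega), zero_mul]
  · rw [Set.indicator_of_notMem (s := {c | w c = t}) hr]
    simp only [mulVec, dotProduct]
    refine (Finset.sum_eq_zero fun c _ => ?_).symm
    by_cases hc : w c = t
    · rw [h.diag_apply_eq_zero_of_ne r c (fun h => hr (h.trans hc)), zero_mul]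
    · rw [Set.indicator_of_notMem (s := {c | w c = t}) hc, mul_zero]

variable [DecidableEq ι]

lemma pow_mulVec (h : IsGradedTriangular w N E) {t : ℕ} {v : ι → ℂ}
    (hv : ∀ c, t < w c → v c = 0) (k : ℕ) :
    (∀ c, t < w c → (N ^ k *ᵥ v) c = 0) ∧
      {c | w c = t}.indicator (N ^ k *ᵥ v) = E ^ k *ᵥ {c | w c = t}.indicator v := by
  induction k with
  | zero => simpa using hv
  | succ k ih =>
    rw [pow_succ', pow_succ', ← mulVec_mulVec, ← mulVec_mulVec, h.indicator_mulVec ih.1, ih.2]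
    exact ⟨h.mulVec_apply_eq_zero ih.1, rfl⟩

lemma pow_mulVec_eq_zero (h : IsGradedTriangular w N E) {p a : ℕ} (hw : ∀ r, w r < p)
    (hE : ∀ K u, E ^ K *ᵥ u = 0 → E ^ a *ᵥ u = 0) {K : ℕ} {v : ι → ℂ} (hv : N ^ K *ᵥ v = 0) :
    N ^ (p * a) *ᵥ v = 0 := by
  suffices key : ∀ t (u : ι → ℂ), (∀ c, t ≤ w c → u c = 0) → N ^ K *ᵥ u = 0 →
      N ^ (t * a) *ᵥ u = 0 from
    key p v (fun c hc => absurd (hw c) (not_lt.2 hc)) hv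
  intro t
  induction t with
  | zero =>
    intro u hu _
    rw [zero_mul, pow_zero, one_mulVec]
    exact funext fun c => hu c (Nat.zero_le _)
  | succ t ih =>
    intro u hu hKu
    -- On the top level `t` of `u`, `N` acts as `E`, so `N ^ a` pushes `u` one level down.
    have hlevels := h.pow_mulVec (t := t) (v := u) hu
    have htop : {c | w c = t}.indicator (N ^ a *ᵥ u) = 0 := by
      rw [(hlevels a).2]
      refine hE K _ ?_
      rw [← (hlevels K).2, hKu, Set.indicator_zero']
    have hbelow : ∀ c, t ≤ w c → (N ^ a *ᵥ u) c = 0 := by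
      intro c hc
      rcases hc.lt_or_eq with hlt | heq
      · exact (hlevels a).1 c hlt
      · simpa [Set.indicator_of_mem (s := {c | w c = t}) heq.symm] using congrFun htop c
    have hK : N ^ K *ᵥ (N ^ a *ᵥ u) = 0 := by
      rw [mulVec_mulVec, ← pow_add, add_comm, pow_add, ← mulVec_mulVec, hKu, mulVec_zero]
    rw [add_mul, one_mul, pow_add, ← mulVec_mulVec]
    exact ih _ hbelow hK

lemma ascentLE (h : IsGradedTriangular w N E) {p a : ℕ} {μ : ℂ} (hw : ∀ r, w r < p)
    (hE : AscentLE E μ a) : AscentLE N μ (p * a) :=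
  fun _ _ hv => (h.sub_smul_one μ).pow_mulVec_eq_zero hw hE hv

lemma mnSet (h : IsGradedTriangular w N E) {Ω : Set ℂ} {p m : ℕ} (hw : ∀ r, w r < p)
    (hE : MnSet Ω m E) : MnSet Ω (p * m) N := by
  rw [mnSet_iff] at hE ⊢
  refine ⟨fun μ hμ => h.ascentLE hw (hE.1 μ hμ), fun μ hμ => ?_⟩
  simpa using h.ascentLE hw (hE.2 μ hμ)

end IsGradedTriangular

end Graded

section Idx

variable {n : ℕ}

def wt (n : ℕ) : (i : ℕ) → Idx n i → ℕ
  | 0 => fun _ => 0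
  | i + 1 => Sum.elim (wt n i) (fun a => wt n i a + 1)

def diagRep (B : Matrix (Fin n) (Fin n) ℂ) : (i : ℕ) → Matrix (Idx n i) (Idx n i) ℂ
  | 0 => B
  | i + 1 => fromBlocks (diagRep B i) 0 0 (diagRep B i)

lemma wt_lt : ∀ {i : ℕ} (r : Idx n i), wt n i r < i + 1
  | 0, _ => Nat.zero_lt_one
  | i + 1, Sum.inl a => (wt_lt (i := i) a).trans (Nat.lt_succ_self _)
  | i + 1, Sum.inr a => Nat.succ_lt_succ (wt_lt (i := i) a)

lemma MnSet.diagRep {Ω : Set ℂ} {m : ℕ} {B : Matrix (Fin n) (Fin n) ℂ} (hB : MnSet Ω m B) :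
    ∀ i, MnSet Ω m (diagRep B i)
  | 0 => hB
  | i + 1 => (hB.diagRep i).fromBlocks_diagonal (hB.diagRep i)

end Idx

section Calculus

variable {E : Type*} [NormedAddCommGroup E] [NormedSpace ℝ E]
  {ι κ : Type*} [Fintype ι] [Fintype κ]

lemma fderiv_apply_eq_zero_of_eventually {X : E → Matrix ι κ ℂ} {x : E} {r : ι} {c : κ}
    (hX : DifferentiableAt ℝ X x) (h : ∀ᶠ y in 𝓝 x, X y r c = 0) (v : E) :
    fderiv ℝ X x v r c = 0 := by
  let entry : Matrix ι κ ℂ →L[ℝ] ℂ :=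
    ⟨entryLinearMap ℝ ℂ r c, (continuous_apply c).comp (continuous_apply r)⟩
  have hentry : HasFDerivAt (fun y => X y r c) (entry.comp (fderiv ℝ X x)) x :=
    entry.hasFDerivAt.comp x hX.hasFDerivAt
  have hzero : HasFDerivAt (fun y => X y r c) (0 : E →L[ℝ] ℂ) x :=
    (hasFDerivAt_const 0 x).congr_of_eventuallyEq h
  exact congrArg (· v) (hentry.unique hzero)

lemma tendsto_add_smul_nhdsNE (x v : E) : Tendsto (fun ε : ℝ => x + ε • v) (𝓝[≠] 0) (𝓝 x) :=
  ((continuous_const.add (continuous_id.smul continuous_const)).tendsto' 0 x (by simp)).mono_left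
    nhdsWithin_le_nhds

lemma Filter.Tendsto.fromBlocks {l m n o α : Type*} {f : Filter α} {P : α → Matrix n l ℂ}
    {Q : α → Matrix n m ℂ} {R : α → Matrix o l ℂ} {S : α → Matrix o m ℂ} {P₀ Q₀ R₀ S₀}
    (hP : Tendsto P f (𝓝 P₀)) (hQ : Tendsto Q f (𝓝 Q₀)) (hR : Tendsto R f (𝓝 R₀))
    (hS : Tendsto S f (𝓝 S₀)) :
    Tendsto (fun t => fromBlocks (P t) (Q t) (R t) (S t)) f (𝓝 (fromBlocks P₀ Q₀ R₀ S₀)) := by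
  have hcont : Continuous fun p : Matrix n l ℂ × Matrix n m ℂ × Matrix o l ℂ × Matrix o m ℂ =>
      Matrix.fromBlocks p.1 p.2.1 p.2.2.1 p.2.2.2 :=
    continuous_fst.matrix_fromBlocks continuous_snd.fst continuous_snd.snd.fst
      continuous_snd.snd.snd
  exact (hcont.tendsto _).comp (hP.prodMk_nhds (hQ.prodMk_nhds (hR.prodMk_nhds hS)))

section FromBlocks

variable {l m n o : Type*} [Fintype l] [Fintype m] [Fintype n] [Fintype o]

def fromBlocksCLM :
    (Matrix n l ℂ × Matrix n m ℂ × Matrix o l ℂ × Matrix o m ℂ) →L[ℝ] Matrix (n ⊕ o) (l ⊕ m) ℂ where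
  toFun p := fromBlocks p.1 p.2.1 p.2.2.1 p.2.2.2
  map_add' _ _ := (fromBlocks_add ..).symm
  map_smul' _ _ := (fromBlocks_smul ..).symm
  cont := Continuous.matrix_fromBlocks (by fun_prop) (by fun_prop) (by fun_prop) (by fun_prop)

lemma ContDiffAt.fromBlocks {ν : WithTop ℕ∞} {x : E} {P : E → Matrix n l ℂ}
    {Q : E → Matrix n m ℂ} {R : E → Matrix o l ℂ} {S : E → Matrix o m ℂ}
    (hP : ContDiffAt ℝ ν P x) (hQ : ContDiffAt ℝ ν Q x) (hR : ContDiffAt ℝ ν R x)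
    (hS : ContDiffAt ℝ ν S x) :
    ContDiffAt ℝ ν (fun y => fromBlocks (P y) (Q y) (R y) (S y)) x :=
  (fromBlocksCLM.contDiff.comp_contDiffAt x (hP.prodMk (hQ.prodMk (hR.prodMk hS))) :)

end FromBlocks

end Calculus

section Xlim

variable {n j : ℕ}

lemma ContDiffAt.pd {M : Type*} [NormedAddCommGroup M] [NormedSpace ℝ M] {ν : ℕ}
    {X : (Fin j → ℝ) → M} {x : Fin j → ℝ} (hX : ContDiffAt ℝ (ν + 1) X x) (d : Fin j) :
    ContDiffAt ℝ ν (pd d X) x :=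
  (hX.fderiv_right le_rfl).clm_apply contDiffAt_const

lemma tendsto_Qof {i : ℕ} {X : (Fin j → ℝ) → Matrix (Idx n i) (Idx n i) ℂ} {x : Fin j → ℝ}
    (d : Fin j) (hX : DifferentiableAt ℝ X x) :
    Tendsto (Qof X d x) (𝓝[≠] 0) (𝓝 (fromBlocks (X x) (pd d X x) 0 (X x))) :=
  tendsto_const_nhds.fromBlocks (hX.hasFDerivAt.hasLineDerivAt _).tendsto_slope_zero
    tendsto_const_nhds (hX.continuousAt.tendsto.comp (tendsto_add_smul_nhdsNE x _))

lemma Xlim_succ_eq {A : (Fin j → ℝ) → Matrix (Fin n) (Fin n) ℂ} {d : ℕ → Fin j} {i : ℕ}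
    {x : Fin j → ℝ} (hX : DifferentiableAt ℝ (Xlim A d i) x) :
    Xlim A d (i + 1) x =
      fromBlocks (Xlim A d i x) (pd (d i) (Xlim A d i) x) 0 (Xlim A d i x) :=
  (tendsto_Qof (d i) hX).limUnder_eq

lemma eventually_contDiffAt_Xlim_and_isGradedTriangular {k : ℕ}
    {A : (Fin j → ℝ) → Matrix (Fin n) (Fin n) ℂ} {xbar : Fin j → ℝ} (d : ℕ → Fin j)
    (hA : ∀ᶠ x in 𝓝 xbar, ContDiffAt ℝ k A x) :
    ∀ i ≤ k, ∀ᶠ x in 𝓝 xbar,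
      ContDiffAt ℝ (k - i : ℕ) (Xlim A d i) x ∧
        IsGradedTriangular (wt n i) (Xlim A d i x) (diagRep (A x) i)
  | 0, _ => hA.mono fun x hx => ⟨by rwa [Nat.sub_zero],
    fun _ _ h => absurd h (Nat.lt_irrefl 0), fun _ _ _ => rfl, fun _ _ h => absurd rfl h⟩
  | i + 1, hi => by
    have ih := eventually_contDiffAt_Xlim_and_isGradedTriangular d hA i (by omega)
    filter_upwards [ih.eventually_nhds] with x hx
    obtain ⟨hsmooth, hgraded⟩ := hx.self_of_nhds
    have hdiff : ∀ᶠ y in 𝓝 x, DifferentiableAt ℝ (Xlim A d i) y :=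
      hx.mono fun y hy => hy.1.differentiableAt (by norm_cast; omega)
    have hlim : Xlim A d (i + 1) =ᶠ[𝓝 x] fun y =>
        fromBlocks (Xlim A d i y) (pd (d i) (Xlim A d i) y) 0 (Xlim A d i y) :=
      hdiff.mono fun y hy => Xlim_succ_eq hy
    rw [show k - i = k - (i + 1) + 1 by omega] at hsmooth
    refine ⟨?_, ?_⟩
    · have hX : ContDiffAt ℝ (k - (i + 1) : ℕ) (Xlim A d i) x :=
        hsmooth.of_le (by exact_mod_cast Nat.le_succ _)
      exact (hX.fromBlocks (hsmooth.pd (d i)) contDiffAt_const hX).congr_of_eventuallyEq hlim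
    · rw [hlim.self_of_nhds]
      exact hgraded.fromBlocks fun r c hrc => fderiv_apply_eq_zero_of_eventually
        hdiff.self_of_nhds (hx.mono fun y hy => hy.2.1 r c hrc) _

end Xlim

/-- Here `i` runs over `0, …, k - 1`: `Qof … (Xlim A d i)` is the paper's `Q_{i+1}` and
`Xlim A d (i + 1)` is `X_{i+1}`, so the paper's bound `(i + 1) m` reads `(i + 2) m`. -/
theorem Q_and_X_jordan_structure {n j m k : ℕ} (Ω : Set ℂ)
    (A : (Fin j → ℝ) → Matrix (Fin n) (Fin n) ℂ) (xbar : Fin j → ℝ) (d : ℕ → Fin j)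
    (hA : ∀ᶠ x in 𝓝 xbar, ContDiffAt ℝ k A x)
    (hM : ∀ᶠ x in 𝓝 xbar, MnSet Ω m (A x)) :
    ∀ i < k,
      (∀ᶠ ε in 𝓝[≠] (0 : ℝ), MnSet Ω ((i + 2) * m) (Qof (Xlim A d i) (d i) xbar ε)) ∧
        MnSet Ω ((i + 2) * m) (Xlim A d (i + 1) xbar) := by
  intro i hi
  have hgraded := eventually_contDiffAt_Xlim_and_isGradedTriangular d hA
  have hXi : ∀ᶠ x in 𝓝 xbar, MnSet Ω ((i + 1) * m) (Xlim A d i x) :=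
    ((hgraded i hi.le).and hM).mono fun x hx => hx.1.2.mnSet wt_lt (hx.2.diagRep i)
  constructor
  · filter_upwards [(tendsto_add_smul_nhdsNE xbar _).eventually hXi] with ε hε
    obtain ⟨u, hu⟩ := exists_fromBlocks_smul_sub_eq_conj (Xlim A d i xbar)
      (Xlim A d i (xbar + ε • Pi.single (d i) 1)) ε⁻¹
    rw [Qof, hu]
    exact ((hXi.self_of_nhds.fromBlocks_diagonal hε).conj u).mono
      (Nat.mul_le_mul_right m (by omega))
  · exact (hgraded (i + 1) hi).self_of_nhds.2.mnSet wt_lt (hM.self_of_nhds.diagRep (i + 1))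
end
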